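/- arXiv:2112.06527 — 3 statements merged into one kernel-verified Lean document; each statement's English description precedes it below -/
import Mathlib

section
/- Let τ ∈ T(𝔽) be a stopping time, t ≤ T, and let ν be a G^τ-stopping time with ν ≥ t a.s. Suppose P(τ > t) > 0. Then P-a.s., E[X²_ν 1_{ν<τ} + Y²_τ 1_{τ≤ν} | G_t^τ] = Y²_τ 1_{τ≤t} + 1_{τ>t} E_{P|{τ>t}}[X²_ν 1_{ν<τ} + Y²_τ 1_{τ≤ν} | G_t], where E_{P|{τ>t}} denotes conditional expectation under the conditional probability measure P(·|{τ>t}). -/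
open MeasureTheory ProbabilityTheory Set

lemma sup_gen_inter_eq {Ω : Type*} {m : MeasurableSpace Ω} {gens : Set (Set Ω)} {D : Set Ω}
    (hgen : ∀ B ∈ gens, B ∩ D = ∅) {A : Set Ω}
    (hA : MeasurableSet[m ⊔ MeasurableSpace.generateFrom gens] A) :
    ∃ B, MeasurableSet[m] B ∧ A ∩ D = B ∩ D := by
  let m' : MeasurableSpace Ω :=
    { MeasurableSet' := fun A => ∃ B, MeasurableSet[m] B ∧ A ∩ D = B ∩ D
      measurableSet_empty := ⟨∅, @MeasurableSet.empty Ω m, rfl⟩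
      measurableSet_compl := by
        rintro A ⟨B, hB, hAB⟩
        refine ⟨Bᶜ, hB.compl, ?_⟩
        ext ω
        have := Set.ext_iff.mp hAB ω
        simp only [mem_inter_iff, mem_compl_iff] at this ⊢
        tauto
      measurableSet_iUnion := by
        intro f hf
        choose B hB hfB using hf
        exact ⟨⋃ i, B i, MeasurableSet.iUnion hB, by
          rw [Set.iUnion_inter, Set.iUnion_inter]; exact Set.iUnion_congr hfB⟩ }
  have hle : m ⊔ MeasurableSpace.generateFrom gens ≤ m' := by
    refine sup_le (fun A hA => ⟨A, hA, rfl⟩) (MeasurableSpace.generateFrom_le ?_)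
    intro B hB
    exact ⟨∅, @MeasurableSet.empty Ω m, by rw [hgen B hB, Set.empty_inter]⟩
  exact hle A hA

/-- For an `𝔽`-stopping time `τ` and a `𝔾^τ`-stopping time `ν ≥ t`,
`E[X²_ν 1_{ν<τ} + Y²_τ 1_{τ≤ν} | G_t^τ]
  = Y²_τ 1_{τ≤t} + 1_{τ>t} E_{P|{τ>t}}[X²_ν 1_{ν<τ} + Y²_τ 1_{τ≤ν} | G_t]` a.s. -/
theorem stmt_5 {Ω : Type*} [mΩ : MeasurableSpace Ω] (μ : Measure Ω)
    [IsProbabilityMeasure μ] (T : ℕ) (hT : 0 < T)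
    (F G : ℕ → MeasurableSpace Ω)
    (hFmono : Monotone F) (hFle : ∀ s, F s ≤ mΩ)
    (hGmono : Monotone G) (hGF : ∀ s, G s ≤ F s)
    (X2 Y2 : ℕ → Ω → ℝ)
    (hX2adp : ∀ s ≤ T, Measurable[G s] (X2 s)) (hY2adp : ∀ s ≤ T, Measurable[G s] (Y2 s))
    (hX2int : ∀ s ≤ T, Integrable (X2 s) μ) (hY2int : ∀ s ≤ T, Integrable (Y2 s) μ)
    (τ : Ω → ℕ) (hτST : ∀ s, MeasurableSet[F s] {ω | τ ω ≤ s}) (hτval : ∀ ω, τ ω ≤ T)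
    (t : ℕ) (ht : t ≤ T)
    -- the enlarged σ-algebras G_s^τ
    (Gτ : ℕ → MeasurableSpace Ω)
    (hGτ : ∀ s, Gτ s = G s ⊔ MeasurableSpace.generateFrom
        {B : Set Ω | ∃ u ≤ s, B = {ω | τ ω ≤ u}})
    (ν : Ω → ℕ) (hνST : ∀ s, MeasurableSet[Gτ s] {ω | ν ω ≤ s})
    (hνval : ∀ᵐ ω ∂μ, t ≤ ν ω ∧ ν ω ≤ T)
    (hpos : 0 < μ {ω | t < τ ω})
    -- the payoff of Player 2
    (Z : Ω → ℝ)
    (hZ : Z = fun ω => if ν ω < τ ω then X2 (ν ω) ω else Y2 (τ ω) ω) :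
    ∀ᵐ ω ∂μ,
      (μ[Z | Gτ t]) ω =
        ({ω | τ ω ≤ t}).indicator (fun ω => Y2 (τ ω) ω) ω +
        ({ω | t < τ ω}).indicator ((μ[|{ω | t < τ ω}])[Z | G t]) ω := by
  -- notation
  set S : Set Ω := {ω | τ ω ≤ t} with hS
  set D : Set Ω := {ω | t < τ ω} with hD
  set μ' : Measure Ω := μ[|D] with hμ'
  set g : Ω → ℝ := μ'[Z | G t] with hg
  have hDc : D = Sᶜ := by ext ω; simp [hS, hD, not_le]
  -- basic measurability
  have hGle : ∀ s, G s ≤ mΩ := fun s => (hGF s).trans (hFle s)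
  have hGτle : ∀ s, Gτ s ≤ mΩ := by
    intro s
    rw [hGτ s]
    refine sup_le (hGle s) (MeasurableSpace.generateFrom_le ?_)
    rintro B ⟨u, hu, rfl⟩
    exact hFle u _ (hτST u)
  have hGtGτ : G t ≤ Gτ t := (hGτ t) ▸ le_sup_left
  have hgen_le : MeasurableSpace.generateFrom {B : Set Ω | ∃ u ≤ t, B = {ω | τ ω ≤ u}} ≤ Gτ t :=
    (hGτ t) ▸ le_sup_right
  have hτsets : ∀ s, MeasurableSet {ω | τ ω ≤ s} := fun s => hFle s _ (hτST s)
  have hνsets : ∀ s, MeasurableSet {ω | ν ω ≤ s} := fun s => hGτle s _ (hνST s)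
  have hτmeas : Measurable τ := by
    apply measurable_to_countable'
    intro y
    match y with
    | 0 =>
      have : τ ⁻¹' {0} = {ω | τ ω ≤ 0} := by ext ω; simp [Nat.le_zero]
      exact this ▸ hτsets 0
    | (n+1) =>
      have : τ ⁻¹' {n+1} = {ω | τ ω ≤ n+1} \ {ω | τ ω ≤ n} := by
        ext ω; simp only [mem_preimage, mem_singleton_iff, mem_diff, mem_setOf_eq]; omega
      exact this ▸ ((hτsets (n+1)).diff (hτsets n))
  have hνmeas : Measurable ν := by
    apply measurable_to_countable'
    intro y
    match y with
    | 0 =>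
      have : ν ⁻¹' {0} = {ω | ν ω ≤ 0} := by ext ω; simp [Nat.le_zero]
      exact this ▸ hνsets 0
    | (n+1) =>
      have : ν ⁻¹' {n+1} = {ω | ν ω ≤ n+1} \ {ω | ν ω ≤ n} := by
        ext ω; simp only [mem_preimage, mem_singleton_iff, mem_diff, mem_setOf_eq]; omega
      exact this ▸ ((hνsets (n+1)).diff (hνsets n))
  have hSm : MeasurableSet S := hτsets t
  have hDm : MeasurableSet D := by rw [hDc]; exact hSm.compl
  have hSmGτ : MeasurableSet[Gτ t] S :=
    hgen_le _ (MeasurableSpace.measurableSet_generateFrom ⟨t, le_refl t, rfl⟩)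
  have hDmGτ : MeasurableSet[Gτ t] D := by rw [hDc]; exact hSmGτ.compl
  have hμD : μ D ≠ 0 := hpos.ne'
  have hμDt : μ D ≠ ⊤ := measure_ne_top μ D
  haveI : IsProbabilityMeasure μ' := cond_isProbabilityMeasure hμD
  -- Z is integrable
  have hZeq : Z = fun ω =>
      (∑ s ∈ Finset.range (T+1), ({ω | ν ω = s ∧ ν ω < τ ω}).indicator (X2 s) ω) +
      (∑ s ∈ Finset.range (T+1), ({ω | τ ω = s ∧ ¬ ν ω < τ ω}).indicator (Y2 s) ω) := by
    funext ω
    simp only [hZ]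
    by_cases hlt : ν ω < τ ω
    · rw [if_pos hlt]
      have h1 : ∑ s ∈ Finset.range (T+1), ({ω | ν ω = s ∧ ν ω < τ ω}).indicator (X2 s) ω
          = X2 (ν ω) ω := by
        rw [Finset.sum_eq_single (ν ω)]
        · exact indicator_of_mem (by exact ⟨rfl, hlt⟩) _
        · intro s _ hne
          exact indicator_of_notMem (fun hc => hne (hc.1.symm)) _
        · intro hc
          exact absurd (Finset.mem_range.mpr (by have := hτval ω; omega)) hc
      have h2 : ∑ s ∈ Finset.range (T+1), ({ω | τ ω = s ∧ ¬ ν ω < τ ω}).indicator (Y2 s) ω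
          = 0 := Finset.sum_eq_zero fun s _ => indicator_of_notMem (fun hc => hc.2 hlt) _
      rw [h1, h2, add_zero]
    · rw [if_neg hlt]
      have h1 : ∑ s ∈ Finset.range (T+1), ({ω | ν ω = s ∧ ν ω < τ ω}).indicator (X2 s) ω
          = 0 := Finset.sum_eq_zero fun s _ => indicator_of_notMem (fun hc => hlt hc.2) _
      have h2 : ∑ s ∈ Finset.range (T+1), ({ω | τ ω = s ∧ ¬ ν ω < τ ω}).indicator (Y2 s) ω
          = Y2 (τ ω) ω := by
        rw [Finset.sum_eq_single (τ ω)]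
        · exact indicator_of_mem (by exact ⟨rfl, hlt⟩) _
        · intro s _ hne
          exact indicator_of_notMem (fun hc => hne (hc.1.symm)) _
        · intro hc
          exact absurd (Finset.mem_range.mpr (by have := hτval ω; omega)) hc
      rw [h1, h2, zero_add]
  have hsetX : ∀ s : ℕ, MeasurableSet {ω | ν ω = s ∧ ν ω < τ ω} := by
    intro s
    have : {ω | ν ω = s ∧ ν ω < τ ω} = (ν ⁻¹' {s}) ∩ {ω | τ ω ≤ s}ᶜ := by
      ext ω; simp only [mem_inter_iff, mem_preimage, mem_singleton_iff, mem_compl_iff,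
        mem_setOf_eq]; omega
    rw [this]
    exact (hνmeas (measurableSet_singleton s)).inter (hτsets s).compl
  have hsetY : ∀ s : ℕ, MeasurableSet {ω | τ ω = s ∧ ¬ ν ω < τ ω} := by
    intro s
    match s with
    | 0 =>
      have : {ω | τ ω = 0 ∧ ¬ ν ω < τ ω} = τ ⁻¹' {0} := by
        ext ω; simp only [mem_setOf_eq, mem_preimage, mem_singleton_iff]; omega
      rw [this]; exact hτmeas (measurableSet_singleton 0)
    | (n+1) =>
      have : {ω | τ ω = n+1 ∧ ¬ ν ω < τ ω} = (τ ⁻¹' {n+1}) ∩ {ω | ν ω ≤ n}ᶜ := by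
        ext ω; simp only [mem_inter_iff, mem_preimage, mem_singleton_iff, mem_compl_iff,
          mem_setOf_eq]; omega
      rw [this]
      exact (hτmeas (measurableSet_singleton (n+1))).inter (hνsets n).compl
  have hZint : Integrable Z μ := by
    rw [hZeq]
    refine Integrable.add (integrable_finset_sum _ fun s hs => ?_)
      (integrable_finset_sum _ fun s hs => ?_)
    · exact (hX2int s (Nat.lt_succ_iff.mp (Finset.mem_range.mp hs))).indicator (hsetX s)
    · exact (hY2int s (Nat.lt_succ_iff.mp (Finset.mem_range.mp hs))).indicator (hsetY s)
  have hμ'le : Integrable Z μ' := by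
    rw [hμ', ProbabilityTheory.cond]
    exact (hZint.restrict).smul_measure (ENNReal.inv_ne_top.mpr hμD)
  -- the candidate function
  set f : Ω → ℝ := fun ω => S.indicator (fun ω => Y2 (τ ω) ω) ω + D.indicator g ω with hf
  -- rewrite the indicator of Y2∘τ as a finite sum
  have hWsum : S.indicator (fun ω => Y2 (τ ω) ω) =
      fun ω => ∑ s ∈ Finset.range (t+1), ({ω | τ ω = s}).indicator (Y2 s) ω := by
    funext ω
    by_cases hω : ω ∈ S
    · rw [indicator_of_mem hω]
      rw [Finset.sum_eq_single (τ ω)]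
      · exact (Set.indicator_of_mem (show ω ∈ {ω' : Ω | τ ω' = τ ω} from rfl) (Y2 (τ ω))).symm
      · intro s _ hne
        exact indicator_of_notMem (fun hc => hne (hc.symm)) _
      · intro hc
        exact absurd (Finset.mem_range.mpr (Nat.lt_succ_of_le hω)) hc
    · rw [indicator_of_notMem hω]
      symm
      refine Finset.sum_eq_zero fun s hs => indicator_of_notMem (fun hc => ?_) _
      exact hω (le_trans (le_of_eq hc) (Nat.lt_succ_iff.mp (Finset.mem_range.mp hs)))
  have hτeqGτ : ∀ s, s ≤ t → MeasurableSet[Gτ t] {ω | τ ω = s} := by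
    intro s hst
    match s with
    | 0 =>
      have : {ω | τ ω = 0} = {ω | τ ω ≤ 0} := by ext ω; simp [Nat.le_zero]
      exact this ▸ hgen_le _ (MeasurableSpace.measurableSet_generateFrom ⟨0, Nat.zero_le t, rfl⟩)
    | (n+1) =>
      have : {ω | τ ω = n+1} = {ω | τ ω ≤ n+1} \ {ω | τ ω ≤ n} := by
        ext ω; simp only [mem_diff, mem_setOf_eq]; omega
      rw [this]
      exact MeasurableSet.diff
        (hgen_le _ (MeasurableSpace.measurableSet_generateFrom ⟨n+1, hst, rfl⟩))
        (hgen_le _ (MeasurableSpace.measurableSet_generateFrom ⟨n, by omega, rfl⟩))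
  -- measurability of f w.r.t. Gτ t
  have hfmeas : StronglyMeasurable[Gτ t] f := by
    rw [hf, hWsum]
    apply StronglyMeasurable.add
    · apply Finset.stronglyMeasurable_fun_sum
      intro s hs
      have hst : s ≤ t := Nat.lt_succ_iff.mp (Finset.mem_range.mp hs)
      exact StronglyMeasurable.indicator
        ((((hY2adp s (hst.trans ht)).mono (hGmono hst) le_rfl).mono hGtGτ le_rfl).stronglyMeasurable)
        (hτeqGτ s hst)
    · exact (stronglyMeasurable_condExp.mono hGtGτ).indicator hDmGτ
  -- integrability pieces
  have hWint : Integrable (S.indicator (fun ω => Y2 (τ ω) ω)) μ := by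
    rw [hWsum]
    refine integrable_finset_sum _ fun s hs => ?_
    have hst : s ≤ t := Nat.lt_succ_iff.mp (Finset.mem_range.mp hs)
    exact (hY2int s (hst.trans ht)).indicator (hτmeas (measurableSet_singleton s))
  have hrestr : μ.restrict D = (μ D) • μ' := by
    rw [hμ', ProbabilityTheory.cond, smul_smul, ENNReal.mul_inv_cancel hμD hμDt, one_smul]
  have hgint' : Integrable g μ' := integrable_condExp
  have hgD : IntegrableOn g D μ := by
    rw [IntegrableOn, hrestr]
    exact hgint'.smul_measure hμDt
  have hDgint : Integrable (D.indicator g) μ := by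
    rw [integrable_indicator_iff hDm]
    exact hgD
  have hfint : Integrable f μ := hWint.add hDgint
  -- ae equality Z = Y2∘τ on S
  have hZS : ∀ᵐ ω ∂μ, ω ∈ S → Z ω = Y2 (τ ω) ω := by
    filter_upwards [hνval] with ω hν hmem
    rw [hZ]
    exact if_neg (by have h1 := hν.1; have h2 : τ ω ≤ t := hmem; omega)
  -- main computation
  have key : f =ᵐ[μ] μ[Z | Gτ t] := by
    apply ae_eq_condExp_of_forall_setIntegral_eq (hGτle t) hZint
    · intro A hA _
      exact hfint.integrableOn
    · intro A hA _
      have hAm : MeasurableSet A := hGτle t A hA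
      -- split the integral of Z over A
      have hsplitZ : ∫ ω in A, Z ω ∂μ = ∫ ω in A ∩ S, Z ω ∂μ + ∫ ω in A ∩ D, Z ω ∂μ := by
        have h1 := integral_add_compl hSm (hZint.restrict (s := A))
        rw [Measure.restrict_restrict hSm, Measure.restrict_restrict hSm.compl] at h1
        rw [← hDc] at h1
        rw [Set.inter_comm S A, Set.inter_comm D A] at h1
        exact h1.symm
      -- split the integral of f over A
      have hsplitf : ∫ ω in A, f ω ∂μ
          = ∫ ω in A ∩ S, Y2 (τ ω) ω ∂μ + ∫ ω in A ∩ D, g ω ∂μ := by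
        rw [hf, integral_add hWint.integrableOn hDgint.integrableOn,
          setIntegral_indicator hSm, setIntegral_indicator hDm]
      -- part on S
      have hpartS : ∫ ω in A ∩ S, Y2 (τ ω) ω ∂μ = ∫ ω in A ∩ S, Z ω ∂μ := by
        apply setIntegral_congr_ae (hAm.inter hSm)
        filter_upwards [hZS] with ω h hmem
        exact (h hmem.2).symm
      -- part on D
      obtain ⟨B, hB, hABD⟩ : ∃ B, MeasurableSet[G t] B ∧ A ∩ D = B ∩ D := by
        apply sup_gen_inter_eq (m := G t) (gens := {B : Set Ω | ∃ u ≤ t, B = {ω | τ ω ≤ u}})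
        · rintro B ⟨u, hu, rfl⟩
          ext ω
          simp only [mem_inter_iff, mem_setOf_eq, mem_empty_iff_false, iff_false, not_and, hD]
          intro h1; omega
        · rw [← hGτ t]; exact hA
      have hBm : MeasurableSet B := hGle t B hB
      have hDint : ∀ h : Ω → ℝ, Integrable h μ' →
          ∫ ω in B ∩ D, h ω ∂μ = (μ D).toReal • ∫ ω in B, h ω ∂μ' := by
        intro h hint
        rw [← Measure.restrict_restrict hBm, hrestr, Measure.restrict_smul, integral_smul_measure]
      have hpartD : ∫ ω in A ∩ D, g ω ∂μ = ∫ ω in A ∩ D, Z ω ∂μ := by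
        rw [hABD, hDint g hgint', hDint Z hμ'le,
          setIntegral_condExp (hGle t) hμ'le hB]
      rw [hsplitZ, hsplitf, hpartS, hpartD]
    · exact StronglyMeasurable.aestronglyMeasurable hfmeas
  filter_upwards [key] with ω hω
  exact hω.symm
end

section
/- Under the hypotheses of Theorem 1, for every 𝔾^τ-stopping time ν ≥ t, the essential suprema over 𝔾 and over 𝔾^τ agree after conditioning on {τ > t}: ess sup_{ν ∈ T_t(𝔾^τ)} E_{P|{τ>t}}[X²_ν 1_{ν<τ} + Y²_τ 1_{τ≤ν} | G_t] = ess sup_{ν ∈ T_t(𝔾)} E_{P|{τ>t}}[X²_ν 1_{ν<τ} + Y²_τ 1_{τ≤ν} | G_t], P-a.s., provided P(τ>t) > 0. -/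
open MeasureTheory ProbabilityTheory Set

/-- `W` is an essential supremum (w.r.t. `μ`) of the family of functions `S`. -/
def IsEssSupOfFamily {Ω : Type*} [MeasurableSpace Ω] (μ : Measure Ω)
    (S : Set (Ω → ℝ)) (W : Ω → ℝ) : Prop :=
  (∀ f ∈ S, ∀ᵐ ω ∂μ, f ω ≤ W ω) ∧
    ∀ W' : Ω → ℝ, (∀ f ∈ S, ∀ᵐ ω ∂μ, f ω ≤ W' ω) → ∀ᵐ ω ∂μ, W ω ≤ W' ω

/-- after conditioning on `{τ > t}`, the essential supremum of the
conditional payoffs over `𝔾^τ`-stopping times in `[t,T]` coincides a.s. with the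
one over `𝔾`-stopping times in `[t,T]`. -/
theorem stmt_7 {Ω : Type*} [mΩ : MeasurableSpace Ω] (μ : Measure Ω)
    [IsProbabilityMeasure μ] (T : ℕ) (hT : 0 < T)
    (F G : ℕ → MeasurableSpace Ω)
    (hFmono : Monotone F) (hFle : ∀ s, F s ≤ mΩ)
    (hGmono : Monotone G) (hGF : ∀ s, G s ≤ F s)
    (X2 Y2 : ℕ → Ω → ℝ)
    (hX2adp : ∀ s ≤ T, Measurable[G s] (X2 s)) (hY2adp : ∀ s ≤ T, Measurable[G s] (Y2 s))
    (hX2int : ∀ s ≤ T, Integrable (X2 s) μ) (hY2int : ∀ s ≤ T, Integrable (Y2 s) μ)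
    (τ : Ω → ℕ) (hτST : ∀ s, MeasurableSet[F s] {ω | τ ω ≤ s}) (hτval : ∀ ω, τ ω ≤ T)
    (t : ℕ) (ht : t ≤ T - 1) (hpos : 0 < μ {ω | t < τ ω})
    -- the enlarged σ-algebras G_s^τ
    (Gτ : ℕ → MeasurableSpace Ω)
    (hGτ : ∀ s, Gτ s = G s ⊔ MeasurableSpace.generateFrom
        {B : Set Ω | ∃ u ≤ s, B = {ω | τ ω ≤ u}})
    (W₁ W₂ : Ω → ℝ)
    (hW₁ : IsEssSupOfFamily μ
      {f : Ω → ℝ | ∃ ν : Ω → ℕ,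
        (∀ s, MeasurableSet[Gτ s] {ω | ν ω ≤ s}) ∧ (∀ ω, t ≤ ν ω ∧ ν ω ≤ T) ∧
        f = (μ[|{ω | t < τ ω}])[fun ω =>
              if ν ω < τ ω then X2 (ν ω) ω else Y2 (τ ω) ω | G t]} W₁)
    (hW₂ : IsEssSupOfFamily μ
      {f : Ω → ℝ | ∃ ν : Ω → ℕ,
        (∀ s, MeasurableSet[G s] {ω | ν ω ≤ s}) ∧ (∀ ω, t ≤ ν ω ∧ ν ω ≤ T) ∧
        f = (μ[|{ω | t < τ ω}])[fun ω =>
              if ν ω < τ ω then X2 (ν ω) ω else Y2 (τ ω) ω | G t]} W₂) :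
    ∀ᵐ ω ∂μ, W₁ ω = W₂ ω := by
  have hGleGτ : ∀ s, G s ≤ Gτ s := by
    intro s; rw [hGτ s]; exact le_sup_left
  -- restriction lemma: any Gτ s measurable set agrees with a G s measurable set on {τ > s}
  have hrestrict : ∀ (s : ℕ) (A : Set Ω), MeasurableSet[Gτ s] A →
      ∃ B : Set Ω, MeasurableSet[G s] B ∧
        A ∩ {ω | s < τ ω} = B ∩ {ω | s < τ ω} := by
    intro s A hA
    let m : MeasurableSpace Ω :=
      { MeasurableSet' := fun A => ∃ B : Set Ω, MeasurableSet[G s] B ∧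
          A ∩ {ω | s < τ ω} = B ∩ {ω | s < τ ω}
        measurableSet_empty := ⟨∅, @MeasurableSet.empty _ (G s), by simp⟩
        measurableSet_compl := by
          rintro A ⟨B, hB, hAB⟩
          refine ⟨Bᶜ, hB.compl, ?_⟩
          ext ω
          have := Set.ext_iff.mp hAB ω
          simp only [mem_inter_iff, mem_setOf_eq, mem_compl_iff] at this ⊢
          tauto
        measurableSet_iUnion := by
          rintro g hg
          choose B hB hBg using hg
          refine ⟨⋃ i, B i, MeasurableSet.iUnion hB, ?_⟩
          rw [Set.iUnion_inter, Set.iUnion_inter]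
          exact Set.iUnion_congr hBg }
    have hle : Gτ s ≤ m := by
      rw [hGτ s]
      refine sup_le ?_ ?_
      · intro A hA; exact ⟨A, hA, rfl⟩
      · refine MeasurableSpace.generateFrom_le ?_
        rintro C ⟨u, hu, rfl⟩
        refine ⟨∅, @MeasurableSet.empty _ (G s), ?_⟩
        ext ω
        simp only [mem_inter_iff, mem_setOf_eq, mem_empty_iff_false, false_and, iff_false,
          not_and]
        intro h1 h2
        omega
    exact hle A hA
  -- key: convert a Gτ-stopping time to a G-stopping time with the same payoff
  have key : ∀ ν : Ω → ℕ, (∀ s, MeasurableSet[Gτ s] {ω | ν ω ≤ s}) →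
      (∀ ω, t ≤ ν ω ∧ ν ω ≤ T) →
      ∃ ν' : Ω → ℕ, (∀ s, MeasurableSet[G s] {ω | ν' ω ≤ s}) ∧
        (∀ ω, t ≤ ν' ω ∧ ν' ω ≤ T) ∧
        ∀ ω, (if ν' ω < τ ω then X2 (ν' ω) ω else Y2 (τ ω) ω)
           = (if ν ω < τ ω then X2 (ν ω) ω else Y2 (τ ω) ω) := by
    intro ν hν hνb
    have hBex : ∀ s : ℕ, ∃ B : Set Ω, MeasurableSet[G s] B ∧
        ({ω | ν ω ≤ s} ∩ {ω | s < τ ω} = B ∩ {ω | s < τ ω}) ∧ (T ≤ s → B = Set.univ) := by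
      intro s
      by_cases h : s < T
      · obtain ⟨B, hB, hBeq⟩ := hrestrict s {ω | ν ω ≤ s} (hν s)
        exact ⟨B, hB, hBeq, fun hTs => absurd h (by omega)⟩
      · refine ⟨Set.univ, MeasurableSet.univ, ?_, fun _ => rfl⟩
        have : {ω | s < τ ω} = (∅ : Set Ω) := by
          ext ω; simp only [mem_setOf_eq, mem_empty_iff_false, iff_false, not_lt]
          have := hτval ω; omega
        rw [this]; simp
    choose B hBmeas hBeq hBuniv using hBex
    -- the pointwise iff
    have hiff : ∀ (s : ℕ) (ω : Ω), (ν ω ≤ s ∧ s < τ ω) ↔ (ω ∈ B s ∧ s < τ ω) := by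
      intro s ω
      have := Set.ext_iff.mp (hBeq s) ω
      simpa only [mem_inter_iff, mem_setOf_eq] using this
    set ν' : Ω → ℕ := fun ω => sInf {s | t ≤ s ∧ ω ∈ B s} with hν'def
    have htT : t ≤ T := by omega
    have hTmem : ∀ ω, T ∈ {s | t ≤ s ∧ ω ∈ B s} := by
      intro ω
      refine ⟨htT, ?_⟩
      rw [hBuniv T le_rfl]; trivial
    have hne : ∀ ω, ({s | t ≤ s ∧ ω ∈ B s} : Set ℕ).Nonempty := fun ω => ⟨T, hTmem ω⟩
    have hmem : ∀ ω, ν' ω ∈ {s | t ≤ s ∧ ω ∈ B s} := fun ω => Nat.sInf_mem (hne ω)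
    have hν'b : ∀ ω, t ≤ ν' ω ∧ ν' ω ≤ T :=
      fun ω => ⟨(hmem ω).1, Nat.sInf_le (hTmem ω)⟩
    refine ⟨ν', ?_, hν'b, ?_⟩
    · intro s
      have hset : {ω | ν' ω ≤ s} = ⋃ u ∈ Finset.Icc t s, B u := by
        ext ω
        simp only [mem_setOf_eq, Set.mem_iUnion, Finset.mem_Icc, exists_prop]
        constructor
        · intro h
          exact ⟨ν' ω, ⟨(hmem ω).1, h⟩, (hmem ω).2⟩
        · rintro ⟨u, ⟨hu1, hu2⟩, hu3⟩
          exact le_trans (Nat.sInf_le ⟨hu1, hu3⟩) hu2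
      rw [hset]
      exact MeasurableSet.biUnion (Finset.Icc t s).countable_toSet
        (fun u hu => hGmono (Finset.mem_Icc.mp hu).2 _ (hBmeas u))
    · intro ω
      by_cases h : ν ω < τ ω
      · have hle1 : ν' ω ≤ ν ω :=
          Nat.sInf_le ⟨(hνb ω).1, ((hiff (ν ω) ω).mp ⟨le_rfl, h⟩).1⟩
        have hle2 : ν ω ≤ ν' ω := by
          by_contra hc
          push_neg at hc
          have hlt : ν' ω < τ ω := lt_of_lt_of_le hc (le_of_lt h)
          have := ((hiff (ν' ω) ω).mpr ⟨(hmem ω).2, hlt⟩).1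
          omega
        have heq : ν' ω = ν ω := le_antisymm hle1 hle2
        rw [heq]
      · have h2 : ¬ ν' ω < τ ω := by
          intro hc
          have := ((hiff (ν' ω) ω).mpr ⟨(hmem ω).2, hc⟩).1
          have := hc
          omega
        rw [if_neg h2, if_neg h]
  have h12 : ∀ᵐ ω ∂μ, W₁ ω ≤ W₂ ω := by
    refine hW₁.2 W₂ ?_
    rintro f ⟨ν, hν, hνb, rfl⟩
    obtain ⟨ν', hν', hνb', hpay⟩ := key ν hν hνb
    refine hW₂.1 _ ⟨ν', hν', hνb', ?_⟩
    have hfe : (fun ω => if ν ω < τ ω then X2 (ν ω) ω else Y2 (τ ω) ω)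
        = (fun ω => if ν' ω < τ ω then X2 (ν' ω) ω else Y2 (τ ω) ω) :=
      funext fun ω => (hpay ω).symm
    rw [hfe]
  have h21 : ∀ᵐ ω ∂μ, W₂ ω ≤ W₁ ω := by
    refine hW₂.2 W₁ ?_
    rintro f ⟨ν, hν, hνb, rfl⟩
    exact hW₁.1 _ ⟨ν, fun s => hGleGτ s _ (hν s), hνb, rfl⟩
  filter_upwards [h12, h21] with ω h1 h2
  exact le_antisymm h1 h2
end

section
/- Epsilon-perturbation lemma: Assume X¹_t ≥ Y¹_t a.s. for all 0 ≤ t ≤ T, and let ε > 0. Define the perturbed game Γ_ε identical to Γ except J_{1,ε}(τ,ν) = E[(X¹_τ + ε)1_{τ≤ν} + Y¹_ν 1_{τ>ν}]. If (τ₀,ν₀) ∈ T(𝔽) × T(𝔾) is a pure-strategy Nash equilibrium of Γ_ε, then it is also a pure-strategy Nash equilibrium of Γ. -/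
open MeasureTheory Set

/-- Expected utility of Player 1: `J₁(τ,ν) = E[X¹_τ 1_{τ≤ν} + Y¹_ν 1_{τ>ν}]`. -/
noncomputable def J1 {Ω : Type*} [MeasurableSpace Ω] (μ : Measure Ω)
    (X1 Y1 : ℕ → Ω → ℝ) (τ ν : Ω → ℕ) : ℝ :=
  ∫ ω, (if τ ω ≤ ν ω then X1 (τ ω) ω else Y1 (ν ω) ω) ∂μ

/-- Expected utility of Player 2: `J₂(τ,ν) = E[X²_ν 1_{ν<τ} + Y²_τ 1_{τ≤ν}]`. -/
noncomputable def J2 {Ω : Type*} [MeasurableSpace Ω] (μ : Measure Ω)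
    (X2 Y2 : ℕ → Ω → ℝ) (τ ν : Ω → ℕ) : ℝ :=
  ∫ ω, (if ν ω < τ ω then X2 (ν ω) ω else Y2 (τ ω) ω) ∂μ


lemma meas_of_ST {Ω : Type*} [mΩ : MeasurableSpace Ω] (τ : Ω → ℕ)
    (h : ∀ s, MeasurableSet {ω | τ ω ≤ s}) : Measurable τ := by
  apply measurable_to_countable'
  intro i
  match i with
  | 0 =>
    have : τ ⁻¹' {0} = {ω | τ ω ≤ 0} := by ext ω; simp [Nat.le_zero]
    rw [this]; exact h 0
  | (n+1) =>
    have : τ ⁻¹' {n+1} = {ω | τ ω ≤ n+1} \ {ω | τ ω ≤ n} := by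
      ext ω; simp only [mem_preimage, mem_singleton_iff, mem_diff, mem_setOf_eq]; omega
    rw [this]; exact (h (n+1)).diff (h n)

lemma integrable_payoff {Ω : Type*} [mΩ : MeasurableSpace Ω] (μ : Measure Ω) (T : ℕ)
    (X Y : ℕ → Ω → ℝ) (τ ν : Ω → ℕ) (hτ : Measurable τ) (hν : Measurable ν)
    (hτT : ∀ ω, τ ω ≤ T) (hνT : ∀ ω, ν ω ≤ T)
    (hX : ∀ s ≤ T, Integrable (X s) μ) (hY : ∀ s ≤ T, Integrable (Y s) μ) :
    Integrable (fun ω => if τ ω ≤ ν ω then X (τ ω) ω else Y (ν ω) ω) μ := by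
  have key : (fun ω => if τ ω ≤ ν ω then X (τ ω) ω else Y (ν ω) ω) =
      fun ω => ∑ i ∈ Finset.range (T+1), ∑ j ∈ Finset.range (T+1),
        ({ω' | τ ω' = i} ∩ {ω' | ν ω' = j}).indicator
          (fun ω' => if i ≤ j then X i ω' else Y j ω') ω := by
    funext ω
    rw [Finset.sum_eq_single_of_mem (τ ω) (by simp [Nat.lt_succ_iff, hτT ω])]
    · rw [Finset.sum_eq_single_of_mem (ν ω) (by simp [Nat.lt_succ_iff, hνT ω])]
      · simp [Set.indicator_apply]
      · intro j _ hj
        simp [Set.indicator_apply, Ne.symm hj]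
    · intro i _ hi
      apply Finset.sum_eq_zero
      intro j _
      simp [Set.indicator_apply, Ne.symm hi]
  rw [key]
  apply integrable_finset_sum
  intro i hi
  apply integrable_finset_sum
  intro j hj
  apply Integrable.indicator
  · by_cases hij : i ≤ j
    · simpa [hij] using hX i (Nat.lt_succ_iff.1 (Finset.mem_range.1 hi))
    · simpa [hij] using hY j (Nat.lt_succ_iff.1 (Finset.mem_range.1 hj))
  · exact (hτ (measurableSet_singleton i)).inter (hν (measurableSet_singleton j))

/-- ε-perturbation lemma: if `X¹ ≥ Y¹` and `(τ₀,ν₀)` is a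
pure-strategy Nash equilibrium of the perturbed game `Γ_ε` (Player 1's stopping
payoff increased by `ε > 0`), then `(τ₀,ν₀)` is a Nash equilibrium of `Γ`. -/
theorem stmt_17 {Ω : Type*} [mΩ : MeasurableSpace Ω] (μ : Measure Ω)
    [IsProbabilityMeasure μ] (T : ℕ) (hT : 0 < T)
    (F G : ℕ → MeasurableSpace Ω)
    (hFmono : Monotone F) (hFle : ∀ s, F s ≤ mΩ)
    (hGmono : Monotone G) (hGF : ∀ s, G s ≤ F s)
    (X1 Y1 X2 Y2 : ℕ → Ω → ℝ)
    (hX1adp : ∀ s ≤ T, Measurable[F s] (X1 s)) (hY1adp : ∀ s ≤ T, Measurable[F s] (Y1 s))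
    (hX2adp : ∀ s ≤ T, Measurable[G s] (X2 s)) (hY2adp : ∀ s ≤ T, Measurable[G s] (Y2 s))
    (hX1int : ∀ s ≤ T, Integrable (X1 s) μ) (hY1int : ∀ s ≤ T, Integrable (Y1 s) μ)
    (hX2int : ∀ s ≤ T, Integrable (X2 s) μ) (hY2int : ∀ s ≤ T, Integrable (Y2 s) μ)
    (hXY : ∀ s ≤ T, ∀ᵐ ω ∂μ, Y1 s ω ≤ X1 s ω)
    (ε : ℝ) (hε : 0 < ε)
    (τ₀ ν₀ : Ω → ℕ)
    (hτ₀ST : ∀ s, MeasurableSet[F s] {ω | τ₀ ω ≤ s}) (hτ₀val : ∀ ω, τ₀ ω ≤ T)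
    (hν₀ST : ∀ s, MeasurableSet[G s] {ω | ν₀ ω ≤ s}) (hν₀val : ∀ ω, ν₀ ω ≤ T)
    -- (τ₀, ν₀) is a Nash equilibrium of the perturbed game Γ_ε :
    (hNashε1 : ∀ τ : Ω → ℕ, (∀ s, MeasurableSet[F s] {ω | τ ω ≤ s}) → (∀ ω, τ ω ≤ T) →
      J1 μ (fun s ω => X1 s ω + ε) Y1 τ ν₀ ≤ J1 μ (fun s ω => X1 s ω + ε) Y1 τ₀ ν₀)
    (hNashε2 : ∀ ν : Ω → ℕ, (∀ s, MeasurableSet[G s] {ω | ν ω ≤ s}) → (∀ ω, ν ω ≤ T) →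
      J2 μ X2 Y2 τ₀ ν ≤ J2 μ X2 Y2 τ₀ ν₀) :
    (∀ τ : Ω → ℕ, (∀ s, MeasurableSet[F s] {ω | τ ω ≤ s}) → (∀ ω, τ ω ≤ T) →
      J1 μ X1 Y1 τ ν₀ ≤ J1 μ X1 Y1 τ₀ ν₀) ∧
    (∀ ν : Ω → ℕ, (∀ s, MeasurableSet[G s] {ω | ν ω ≤ s}) → (∀ ω, ν ω ≤ T) →
      J2 μ X2 Y2 τ₀ ν ≤ J2 μ X2 Y2 τ₀ ν₀) := by
  -- measurability of the stopping times
  have hτ₀m : Measurable τ₀ := meas_of_ST τ₀ (fun s => hFle s _ (hτ₀ST s))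
  have hν₀m : Measurable ν₀ := meas_of_ST ν₀ (fun s => hFle s _ (hGF s _ (hν₀ST s)))
  -- a.e. dominance for all relevant times
  have hXY' : ∀ᵐ ω ∂μ, ∀ s, s ≤ T → Y1 s ω ≤ X1 s ω := by
    rw [ae_all_iff]
    intro s
    by_cases hs : s ≤ T
    · filter_upwards [hXY s hs] with ω h _ using h
    · filter_upwards with ω h; exact absurd h hs
  -- perturbed payoffs are integrable
  have hXεint : ∀ s ≤ T, Integrable (fun ω => X1 s ω + ε) μ :=
    fun s hs => (hX1int s hs).add (integrable_const ε)
  -- Step 1 : τ₀ ≤ ν₀ a.e.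
  set σ : Ω → ℕ := fun ω => min (τ₀ ω) (ν₀ ω) with hσdef
  have hσST : ∀ s, MeasurableSet[F s] {ω | σ ω ≤ s} := by
    intro s
    have : {ω | σ ω ≤ s} = {ω | τ₀ ω ≤ s} ∪ {ω | ν₀ ω ≤ s} := by
      ext ω; simp [hσdef, min_le_iff]
    rw [this]; exact (hτ₀ST s).union (hGF s _ (hν₀ST s))
  have hσval : ∀ ω, σ ω ≤ T := fun ω => le_trans (min_le_left _ _) (hτ₀val ω)
  have hσm : Measurable σ := hτ₀m.min hν₀m
  have h1 := hNashε1 σ hσST hσval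
  set S : Set Ω := {ω | ν₀ ω < τ₀ ω} with hSdef
  have hS : MeasurableSet S := measurableSet_lt hν₀m hτ₀m
  have hgσint : Integrable (fun ω => if σ ω ≤ ν₀ ω then X1 (σ ω) ω + ε else Y1 (ν₀ ω) ω) μ :=
    integrable_payoff μ T _ Y1 σ ν₀ hσm hν₀m hσval hν₀val hXεint hY1int
  have hgτ₀int : Integrable (fun ω => if τ₀ ω ≤ ν₀ ω then X1 (τ₀ ω) ω + ε else Y1 (ν₀ ω) ω) μ :=
    integrable_payoff μ T _ Y1 τ₀ ν₀ hτ₀m hν₀m hτ₀val hν₀val hXεint hY1int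
  have hμS : μ S = 0 := by
    have hmono : ∀ᵐ ω ∂μ, S.indicator (fun _ => ε) ω ≤
        (fun ω => if σ ω ≤ ν₀ ω then X1 (σ ω) ω + ε else Y1 (ν₀ ω) ω) ω -
        (fun ω => if τ₀ ω ≤ ν₀ ω then X1 (τ₀ ω) ω + ε else Y1 (ν₀ ω) ω) ω := by
      filter_upwards [hXY'] with ω hxy
      by_cases h : τ₀ ω ≤ ν₀ ω
      · have hσω : σ ω = τ₀ ω := min_eq_left h
        have hωS : ω ∉ S := by simp [hSdef, not_lt.2 h]
        simp [Set.indicator_apply, hωS, hσω, h, min_le_right]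
      · have hσω : σ ω = ν₀ ω := min_eq_right (le_of_not_ge h)
        have hωS : ω ∈ S := by simpa [hSdef] using lt_of_not_ge h
        have := hxy (ν₀ ω) (hν₀val ω)
        simp only [Set.indicator_apply, if_pos hωS, hσω, le_refl, if_pos, if_neg h]
        linarith
    have hIndint : Integrable (S.indicator (fun _ => ε)) μ :=
      (integrable_const ε).indicator hS
    have h2 : ∫ ω, S.indicator (fun _ => ε) ω ∂μ ≤
        ∫ ω, ((if σ ω ≤ ν₀ ω then X1 (σ ω) ω + ε else Y1 (ν₀ ω) ω) -
          (if τ₀ ω ≤ ν₀ ω then X1 (τ₀ ω) ω + ε else Y1 (ν₀ ω) ω)) ∂μ :=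
      integral_mono_ae hIndint (hgσint.sub hgτ₀int) hmono
    rw [integral_sub hgσint hgτ₀int] at h2
    rw [integral_indicator_const ε hS] at h2
    simp only [J1] at h1
    rw [smul_eq_mul] at h2
    have h3 : (μ S).toReal * ε ≤ 0 := le_trans h2 (by linarith)
    have h4 : (μ S).toReal = 0 := by
      nlinarith [ENNReal.toReal_nonneg (a := μ S)]
    exact (ENNReal.toReal_eq_zero_iff _).1 h4 |>.resolve_right (measure_ne_top μ S)
  have hτν : ∀ᵐ ω ∂μ, τ₀ ω ≤ ν₀ ω := by
    rw [ae_iff]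
    convert hμS using 2
    ext ω; simp [hSdef]
  refine ⟨?_, hNashε2⟩
  intro τ hτST hτval
  have hτm : Measurable τ := meas_of_ST τ (fun s => hFle s _ (hτST s))
  set τ' : Ω → ℕ := fun ω => min (τ ω) (ν₀ ω) with hτ'def
  have hτ'ST : ∀ s, MeasurableSet[F s] {ω | τ' ω ≤ s} := by
    intro s
    have : {ω | τ' ω ≤ s} = {ω | τ ω ≤ s} ∪ {ω | ν₀ ω ≤ s} := by
      ext ω; simp [hτ'def, min_le_iff]
    rw [this]; exact (hτST s).union (hGF s _ (hν₀ST s))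
  have hτ'val : ∀ ω, τ' ω ≤ T := fun ω => le_trans (min_le_left _ _) (hτval ω)
  have hτ'm : Measurable τ' := hτm.min hν₀m
  -- Step 2 : J1(τ,ν₀) ≤ J1(τ',ν₀)
  have step2 : J1 μ X1 Y1 τ ν₀ ≤ J1 μ X1 Y1 τ' ν₀ := by
    apply integral_mono_ae
      (integrable_payoff μ T X1 Y1 τ ν₀ hτm hν₀m hτval hν₀val hX1int hY1int)
      (integrable_payoff μ T X1 Y1 τ' ν₀ hτ'm hν₀m hτ'val hν₀val hX1int hY1int)
    filter_upwards [hXY'] with ω hxy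
    by_cases h : τ ω ≤ ν₀ ω
    · simp [hτ'def, min_eq_left h, h]
    · have hτ'ω : τ' ω = ν₀ ω := min_eq_right (le_of_not_ge h)
      simp only [if_neg h, hτ'ω, le_refl, if_pos]
      exact hxy (ν₀ ω) (hν₀val ω)
  -- Step 3 : J1(τ',ν₀) ≤ J1(τ₀,ν₀)
  have step3 : J1 μ X1 Y1 τ' ν₀ ≤ J1 μ X1 Y1 τ₀ ν₀ := by
    have h1' := hNashε1 τ' hτ'ST hτ'val
    have hA : J1 μ (fun s ω => X1 s ω + ε) Y1 τ' ν₀ = J1 μ X1 Y1 τ' ν₀ + ε := by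
      simp only [J1]
      have e1 : ∀ ω, (if τ' ω ≤ ν₀ ω then X1 (τ' ω) ω + ε else Y1 (ν₀ ω) ω) =
          (if τ' ω ≤ ν₀ ω then X1 (τ' ω) ω else Y1 (ν₀ ω) ω) + ε := by
        intro ω; simp [min_le_right (τ ω) (ν₀ ω), hτ'def]
      simp_rw [e1]
      rw [integral_add (integrable_payoff μ T X1 Y1 τ' ν₀ hτ'm hν₀m hτ'val hν₀val hX1int hY1int)
        (integrable_const ε)]
      simp
    have hB : J1 μ (fun s ω => X1 s ω + ε) Y1 τ₀ ν₀ = J1 μ X1 Y1 τ₀ ν₀ + ε := by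
      simp only [J1]
      have e1 : (fun ω => if τ₀ ω ≤ ν₀ ω then X1 (τ₀ ω) ω + ε else Y1 (ν₀ ω) ω) =ᵐ[μ]
          fun ω => (if τ₀ ω ≤ ν₀ ω then X1 (τ₀ ω) ω else Y1 (ν₀ ω) ω) + ε := by
        filter_upwards [hτν] with ω h; simp [h]
      rw [integral_congr_ae e1,
        integral_add (integrable_payoff μ T X1 Y1 τ₀ ν₀ hτ₀m hν₀m hτ₀val hν₀val hX1int hY1int)
        (integrable_const ε)]
      simp
    rw [hA, hB] at h1'
    linarith
  exact le_trans step2 step3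
end
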